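/- arXiv:2109.01051 — 10 statements merged into one kernel-verified Lean document; each statement's English description precedes it below -/
import Mathlib

section
/- Let d ≥ 2 and let μ be the Haar probability measure on the unitary group U(d) of d × d complex unitary matrices. Let O be a d × d Hermitian matrix and let σ be a d × d Hermitian matrix with Tr[σ] = 1. Define C_σ(U) = Tr[U σ U* O]. Then the variance of C_σ over μ satisfies ∫ C_σ(U)² dμ(U) − (∫ C_σ(U) dμ(U))² = ( Tr[O²] − Tr[O]²/d )·( Tr[σ²] − 1/d ) / (d² − 1). In particular, the Haar-averaged variance of the cost landscape is proportional to the excess purity Tr[σ²] − 1/d of the state. -/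
set_option linter.unusedSectionVars false
set_option linter.unreachableTactic false
set_option linter.unusedTactic false
open MeasureTheory Matrix

noncomputable section HaarAux
variable {d : ℕ}

abbrev UG (d : ℕ) := Matrix.unitaryGroup (Fin d) ℂ

def rho (σ : Matrix (Fin d) (Fin d) ℂ) (U : UG d) : Matrix (Fin d) (Fin d) ℂ :=
  (U : Matrix (Fin d) (Fin d) ℂ) * σ * star (U : Matrix (Fin d) (Fin d) ℂ)

lemma continuous_rho_entry (σ : Matrix (Fin d) (Fin d) ℂ) (i j : Fin d) :
    Continuous (fun U : UG d => rho σ U i j) := by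
  apply Continuous.matrix_elem
  exact (continuous_subtype_val.matrix_mul continuous_const).matrix_mul
    continuous_subtype_val.matrix_conjTranspose

lemma rho_entry_bound (σ : Matrix (Fin d) (Fin d) ℂ) (U : UG d) (i j : Fin d) :
    ‖rho σ U i j‖ ≤ ∑ k, ∑ l, ‖σ k l‖ := by
  have hE : ∀ (p q : Fin d), ‖(U : Matrix (Fin d) (Fin d) ℂ) p q‖ ≤ 1 := fun p q =>
    entry_norm_bound_of_unitary U.2 p q
  have : rho σ U i j = ∑ l, ∑ k, (U : Matrix (Fin d) (Fin d) ℂ) i k * σ k l *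
      star ((U : Matrix (Fin d) (Fin d) ℂ) j l) := by
    simp [rho, Matrix.mul_apply, Matrix.conjTranspose_apply, Finset.sum_mul]
  rw [this, Finset.sum_comm]
  calc ‖∑ k, ∑ l, (U : Matrix (Fin d) (Fin d) ℂ) i k * σ k l *
      star ((U : Matrix (Fin d) (Fin d) ℂ) j l)‖
      ≤ ∑ k, ∑ l, ‖(U : Matrix (Fin d) (Fin d) ℂ) i k * σ k l *
        star ((U : Matrix (Fin d) (Fin d) ℂ) j l)‖ := by
        refine (norm_sum_le _ _).trans (Finset.sum_le_sum fun k _ => norm_sum_le _ _)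
    _ ≤ ∑ k, ∑ l, ‖σ k l‖ := by
        refine Finset.sum_le_sum fun k _ => Finset.sum_le_sum fun l _ => ?_
        rw [norm_mul, norm_mul, norm_star]
        calc ‖(U : Matrix (Fin d) (Fin d) ℂ) i k‖ * ‖σ k l‖ *
            ‖(U : Matrix (Fin d) (Fin d) ℂ) j l‖
            ≤ 1 * ‖σ k l‖ * 1 :=
              mul_le_mul (mul_le_mul (hE i k) le_rfl (norm_nonneg _) zero_le_one) (hE j l)
                (norm_nonneg _) (by positivity)
          _ = ‖σ k l‖ := by ring
variable (σ : Matrix (Fin d) (Fin d) ℂ)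



variable [MeasurableSpace (UG d)] [BorelSpace (UG d)]
variable (μ : Measure (UG d)) [IsProbabilityMeasure μ]

lemma integrable_single (i j : Fin d) : Integrable (fun U : UG d => rho σ U i j) μ :=
  ⟨(continuous_rho_entry σ i j).aestronglyMeasurable,
    HasFiniteIntegral.of_bounded (C := ∑ k, ∑ l, ‖σ k l‖)
      (ae_of_all μ fun U => rho_entry_bound σ U i j)⟩

lemma integrable_pair (i1 i2 j1 j2 : Fin d) :
    Integrable (fun U : UG d => rho σ U i1 j1 * rho σ U i2 j2) μ := by
  refine ⟨((continuous_rho_entry σ i1 j1).mul (continuous_rho_entry σ i2 j2)).aestronglyMeasurable,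
    HasFiniteIntegral.of_bounded (C := (∑ k, ∑ l, ‖σ k l‖) * (∑ k, ∑ l, ‖σ k l‖))
      (ae_of_all μ fun U => ?_)⟩
  have h0 : (0:ℝ) ≤ ∑ k, ∑ l, ‖σ k l‖ :=
    Finset.sum_nonneg fun k _ => Finset.sum_nonneg fun l _ => norm_nonneg _
  exact (norm_mul_le _ _).trans
    (mul_le_mul (rho_entry_bound σ U i1 j1) (rho_entry_bound σ U i2 j2) (norm_nonneg _) h0)

lemma int_left (hleft : ∀ g : UG d, μ.map (fun U => g * U) = μ)
    (F : UG d → ℂ) (hF : Continuous F) (g : UG d) :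
    ∫ U, F (g * U) ∂μ = ∫ U, F U ∂μ := by
  have hg : Continuous (fun U : UG d => g * U) := by
    apply Continuous.subtype_mk
    exact continuous_const.matrix_mul continuous_subtype_val
  conv_rhs => rw [← hleft g]
  rw [integral_map hg.aemeasurable]
  rw [hleft g]
  exact hF.aestronglyMeasurable

lemma rho_mul (g U : UG d) :
    rho σ (g * U) = (g : Matrix (Fin d) (Fin d) ℂ) * rho σ U * star (g : Matrix (Fin d) (Fin d) ℂ) := by
  simp only [rho, Submonoid.coe_mul, Matrix.star_mul]
  simp only [Matrix.mul_assoc]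
def phaseM (k : Fin d) : Matrix (Fin d) (Fin d) ℂ :=
  Matrix.diagonal (fun t => if t = k then Complex.I else 1)

lemma phaseM_mem (k : Fin d) : phaseM k ∈ Matrix.unitaryGroup (Fin d) ℂ := by
  rw [Matrix.mem_unitaryGroup_iff]
  simp only [phaseM, star_eq_conjTranspose, Matrix.diagonal_conjTranspose,
    Matrix.diagonal_mul_diagonal]
  have : ∀ t : Fin d, (if t = k then Complex.I else 1) * star (if t = k then Complex.I else 1)
      = 1 := by
    intro t; by_cases h : t = k <;> simp [h, Complex.mul_conj]
  have h2 : (fun t : Fin d => (if t = k then Complex.I else 1) *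
      star (if t = k then Complex.I else 1)) = fun _ => (1:ℂ) := funext this
  rw [show (fun i : Fin d => (if i = k then Complex.I else 1) *
      star (fun t : Fin d => if t = k then Complex.I else 1) i) = fun _ => (1:ℂ) from
    funext fun t => this t]
  exact Matrix.diagonal_one

lemma phase_conj (k : Fin d) (M : Matrix (Fin d) (Fin d) ℂ) (i j : Fin d) :
    (phaseM k * M * star (phaseM k)) i j =
      (if i = k then Complex.I else 1) * star (if j = k then Complex.I else 1) * M i j := by
  simp only [phaseM, star_eq_conjTranspose, Matrix.diagonal_conjTranspose,
    Matrix.diagonal_mul, Matrix.mul_diagonal, Pi.star_apply]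
  ring

def permM (e : Equiv.Perm (Fin d)) : Matrix (Fin d) (Fin d) ℂ :=
  Matrix.of fun i j => if e i = j then 1 else 0

lemma permM_mem (e : Equiv.Perm (Fin d)) : permM e ∈ Matrix.unitaryGroup (Fin d) ℂ := by
  rw [Matrix.mem_unitaryGroup_iff]
  ext i j
  simp only [Matrix.mul_apply, permM, star_eq_conjTranspose, Matrix.conjTranspose_apply,
    Matrix.of_apply, apply_ite (star : ℂ → ℂ), star_one, star_zero, ite_mul, one_mul, zero_mul,
    Matrix.one_apply]
  rw [Finset.sum_ite_eq Finset.univ (e i)]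
  simp [e.injective.eq_iff, eq_comm]

lemma perm_conj (e : Equiv.Perm (Fin d)) (M : Matrix (Fin d) (Fin d) ℂ) (i j : Fin d) :
    (permM e * M * star (permM e)) i j = M (e i) (e j) := by
  simp only [Matrix.mul_apply, permM, star_eq_conjTranspose, Matrix.conjTranspose_apply,
    Matrix.of_apply, apply_ite (star : ℂ → ℂ), star_one, star_zero, ite_mul, one_mul, zero_mul,
    mul_ite, mul_one, mul_zero]
  rw [Finset.sum_ite_eq Finset.univ (e j)]
  simp [Finset.sum_ite_eq Finset.univ]

def rc : ℂ := ((Real.sqrt 2 : ℝ) : ℂ)⁻¹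

lemma rc_conj : star rc = rc := by
  simp [rc, ← Complex.ofReal_inv, Complex.conj_ofReal]

lemma rc_sq : rc * rc = 1/2 := by
  rw [rc, ← mul_inv, ← Complex.ofReal_mul]
  norm_num [Real.mul_self_sqrt]

def rotM (u v : Fin d) : Matrix (Fin d) (Fin d) ℂ :=
  Matrix.of fun p q =>
    if p = u then (if q = u then rc else if q = v then rc else 0)
    else if p = v then (if q = u then -rc else if q = v then rc else 0)
    else if q = p then 1 else 0

variable {u v : Fin d}

lemma rot_row_sum (huv : u ≠ v) (w : Fin d → ℂ) (p : Fin d) :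
    ∑ k, rotM u v p k * w k =
      if p = u then rc * (w u + w v) else if p = v then rc * (w v - w u)
      else w p := by
  by_cases hp0 : p = u
  · subst hp0
    have : ∀ k : Fin d, rotM p v p k * w k =
        (if k = p then rc * w k else 0) + (if k = v then rc * w k else 0) := by
      intro k
      by_cases h0 : k = p
      · subst h0; simp [rotM, huv, huv.symm]
      · by_cases h1 : k = v <;> simp [rotM, h0, h1, huv.symm]
    simp only [this, Finset.sum_add_distrib, Finset.sum_ite_eq' Finset.univ,
      Finset.mem_univ, if_true, huv]
    simp [mul_add]
  · by_cases hp1 : p = v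
    · subst hp1
      have : ∀ k : Fin d, rotM u p p k * w k =
          (if k = u then -(rc * w k) else 0) + (if k = p then rc * w k else 0) := by
        intro k
        by_cases h0 : k = u
        · subst h0; simp [rotM, huv, huv.symm, hp0]
        · by_cases h1 : k = p <;> simp [rotM, h0, h1, hp0, Ne.symm hp0]
      simp only [this, Finset.sum_add_distrib, Finset.sum_ite_eq' Finset.univ,
        Finset.mem_univ, if_true, hp0, if_neg hp0]
      simp
      ring
    · have : ∀ k : Fin d, rotM u v p k * w k = if k = p then w k else 0 := by
        intro k
        by_cases hk : k = p
        · subst hk; simp [rotM, hp0, hp1]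
        · simp [rotM, hp0, hp1, Ne.symm hk, hk]
      simp [this, Finset.sum_ite_eq' Finset.univ, hp0, hp1]

lemma rot_star_entry (a b : Fin d) : star (rotM u v a b) = rotM u v a b := by
  simp only [rotM, Matrix.of_apply]
  split_ifs <;> simp [rc_conj]

lemma rotM_mem (huv : u ≠ v) : rotM u v ∈ Matrix.unitaryGroup (Fin d) ℂ := by
  rw [Matrix.mem_unitaryGroup_iff]
  ext p q
  rw [Matrix.mul_apply]
  simp only [star_eq_conjTranspose, Matrix.conjTranspose_apply]
  have hsum : ∑ k, rotM u v p k * star (rotM u v q k)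
      = if p = u then rc * (rotM u v q u + rotM u v q v)
        else if p = v then rc * (rotM u v q v - rotM u v q u)
        else rotM u v q p := by
    have := rot_row_sum huv (fun k => star (rotM u v q k)) p
    simpa only [rot_star_entry] using this
  rw [hsum]
  simp only [rotM, Matrix.of_apply, Matrix.one_apply]
  split_ifs <;> (try subst_vars) <;> (try simp_all) <;>
    first
      | (linear_combination (2:ℂ) * rc_sq)
      | ring
      | simp_all

lemma rot_conj00 (huv : u ≠ v) (M : Matrix (Fin d) (Fin d) ℂ) :
    (rotM u v * M * star (rotM u v)) u u =
      (1/2 : ℂ) * (M u u + M u v + M v u + M v v) := by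
  rw [Matrix.mul_apply]
  simp only [star_eq_conjTranspose, Matrix.conjTranspose_apply]
  have key : ∀ l, (rotM u v * M) u l * star (rotM u v u l)
      = rotM u v u l * (rc * (M u l + M v l)) := by
    intro l
    rw [Matrix.mul_apply, rot_row_sum huv, rot_star_entry]
    simp [mul_comm]
  simp only [key]
  rw [rot_row_sum huv (fun l => rc * (M u l + M v l)) u]
  rw [if_pos rfl]
  rw [show rc * (rc * (M u u + M v u) + rc * (M u v + M v v))
      = (rc * rc) * (M u u + M u v + M v u + M v v) by ring, rc_sq]
lemma cancel_ne_one {z c : ℂ} (h : z = c * z) (hc : c ≠ 1) : z = 0 := by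
  have h0 : (c - 1) * z = 0 := by linear_combination -h
  rcases mul_eq_zero.mp h0 with h1 | h1
  · exact absurd (by linear_combination h1) hc
  · exact h1

section Core
variable (σ : Matrix (Fin d) (Fin d) ℂ)
variable [MeasurableSpace (UG d)] [BorelSpace (UG d)]
variable (μ : Measure (UG d)) [IsProbabilityMeasure μ]

def mm (i1 i2 j1 j2 : Fin d) : ℂ := ∫ U, rho σ U i1 j1 * rho σ U i2 j2 ∂μ
def ee (i j : Fin d) : ℂ := ∫ U, rho σ U i j ∂μ

variable {σ μ}
variable (hleft : ∀ g : UG d, μ.map (fun U => g * U) = μ)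
include hleft

lemma mm_conj (g : UG d) (i1 i2 j1 j2 : Fin d) :
    mm σ μ i1 i2 j1 j2 = ∫ U, ((g : Matrix (Fin d) (Fin d) ℂ) * rho σ U *
        star (g : Matrix (Fin d) (Fin d) ℂ)) i1 j1 *
      ((g : Matrix (Fin d) (Fin d) ℂ) * rho σ U * star (g : Matrix (Fin d) (Fin d) ℂ)) i2 j2 ∂μ := by
  have h := int_left μ hleft (fun U => rho σ U i1 j1 * rho σ U i2 j2)
    ((continuous_rho_entry σ i1 j1).mul (continuous_rho_entry σ i2 j2)) g
  rw [mm, ← h]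
  simp only [rho_mul]

lemma ee_conj (g : UG d) (i j : Fin d) :
    ee σ μ i j = ∫ U, ((g : Matrix (Fin d) (Fin d) ℂ) * rho σ U *
        star (g : Matrix (Fin d) (Fin d) ℂ)) i j ∂μ := by
  have h := int_left μ hleft (fun U => rho σ U i j) (continuous_rho_entry σ i j) g
  rw [ee, ← h]
  simp only [rho_mul]

lemma mm_phase (k : Fin d) (i1 i2 j1 j2 : Fin d) :
    mm σ μ i1 i2 j1 j2 =
      ((if i1 = k then Complex.I else 1) * (if i2 = k then Complex.I else 1) *
        star (if j1 = k then Complex.I else 1) * star (if j2 = k then Complex.I else 1)) *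
      mm σ μ i1 i2 j1 j2 := by
  have h := mm_conj (σ := σ) hleft ⟨_, phaseM_mem k⟩ i1 i2 j1 j2
  simp only [phase_conj] at h
  have hp : ∀ U : UG d,
      ((if i1 = k then Complex.I else 1) * star (if j1 = k then Complex.I else 1) * rho σ U i1 j1) *
      ((if i2 = k then Complex.I else 1) * star (if j2 = k then Complex.I else 1) * rho σ U i2 j2)
      = ((if i1 = k then Complex.I else 1) * (if i2 = k then Complex.I else 1) *
        star (if j1 = k then Complex.I else 1) * star (if j2 = k then Complex.I else 1)) *
        (rho σ U i1 j1 * rho σ U i2 j2) := fun U => by ring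
  rw [show (fun U : UG d => _) = _ from funext hp] at h
  rw [integral_const_mul] at h
  exact h

lemma ee_phase (k : Fin d) (i j : Fin d) :
    ee σ μ i j = ((if i = k then Complex.I else 1) * star (if j = k then Complex.I else 1)) *
      ee σ μ i j := by
  have h := ee_conj (σ := σ) hleft ⟨_, phaseM_mem k⟩ i j
  simp only [phase_conj] at h
  have hp : ∀ U : UG d,
      (if i = k then Complex.I else 1) * star (if j = k then Complex.I else 1) * rho σ U i j
      = ((if i = k then Complex.I else 1) * star (if j = k then Complex.I else 1)) *
        (rho σ U i j) := fun U => by ring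
  rw [show (fun U : UG d => _) = _ from funext hp] at h
  rw [integral_const_mul] at h
  exact h

lemma ee_vanish {i j : Fin d} (hij : i ≠ j) : ee σ μ i j = 0 := by
  refine cancel_ne_one (ee_phase (σ := σ) hleft i i j) ?_
  simp only [if_pos rfl, if_neg (fun h : j = i => hij h.symm), star_one, mul_one]
  intro h
  have := congrArg Complex.im h
  simp at this

lemma mm_vanish {i1 i2 j1 j2 : Fin d} (h1 : ¬(j1 = i1 ∧ j2 = i2)) (h2 : ¬(j1 = i2 ∧ j2 = i1)) :
    mm σ μ i1 i2 j1 j2 = 0 := by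
  by_cases hall : ∀ k, ((if i1 = k then 1 else 0) + (if i2 = k then 1 else 0) : ℕ)
      = (if j1 = k then 1 else 0) + (if j2 = k then 1 else 0)
  · exfalso
    have H1 := hall i1; have H2 := hall i2; have H3 := hall j1; have H4 := hall j2
    by_cases e1 : j1 = i1 <;> by_cases e2 : j2 = i2 <;> by_cases e3 : j1 = i2 <;>
      by_cases e4 : j2 = i1 <;> by_cases e5 : i1 = i2 <;> by_cases e6 : j1 = j2 <;>
      simp_all <;> omega
  · push_neg at hall
    obtain ⟨k, hk⟩ := hall
    refine cancel_ne_one (mm_phase (σ := σ) hleft k i1 i2 j1 j2) ?_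
    by_cases c1 : i1 = k <;> by_cases c2 : i2 = k <;> by_cases c3 : j1 = k <;>
      by_cases c4 : j2 = k <;>
      simp_all [Complex.ext_iff] <;> norm_num

lemma mm_perm (e : Equiv.Perm (Fin d)) (i1 i2 j1 j2 : Fin d) :
    mm σ μ i1 i2 j1 j2 = mm σ μ (e i1) (e i2) (e j1) (e j2) := by
  have h := mm_conj (σ := σ) hleft ⟨permM e, permM_mem e⟩ i1 i2 j1 j2
  simp only [perm_conj] at h
  exact h

lemma ee_perm (e : Equiv.Perm (Fin d)) (i j : Fin d) :
    ee σ μ i j = ee σ μ (e i) (e j) := by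
  have h := ee_conj (σ := σ) hleft ⟨permM e, permM_mem e⟩ i j
  simp only [perm_conj] at h
  exact h

lemma mm_rot {u v : Fin d} (huv : u ≠ v) :
    mm σ μ u u u u = mm σ μ u v u v + mm σ μ u v v u := by
  classical
  have h := mm_conj (σ := σ) hleft ⟨rotM u v, rotM_mem huv⟩ u u u u
  simp only [rot_conj00 huv] at h
  set c : Fin 4 → Fin d × Fin d := ![(u,u),(u,v),(v,u),(v,v)] with hc
  have hpw : ∀ U : UG d,
      ((1/2 : ℂ) * (rho σ U u u + rho σ U u v + rho σ U v u + rho σ U v v)) *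
      ((1/2 : ℂ) * (rho σ U u u + rho σ U u v + rho σ U v u + rho σ U v v)) =
      (1/4 : ℂ) * ∑ a : Fin 4, ∑ b : Fin 4,
        rho σ U (c a).1 (c a).2 * rho σ U (c b).1 (c b).2 := by
    intro U
    simp only [Fin.sum_univ_four, hc, Matrix.cons_val_zero, Matrix.cons_val_one,
      Matrix.head_cons, Matrix.cons_val_two, Matrix.tail_cons, Matrix.cons_val_three]
    ring
  simp only [hpw] at h
  rw [integral_const_mul, integral_finset_sum _
    (fun a _ => integrable_finset_sum _ (fun b _ => integrable_pair σ μ _ _ _ _))] at h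
  have hinner : ∀ a : Fin 4, ∫ U, ∑ b : Fin 4,
      rho σ U (c a).1 (c a).2 * rho σ U (c b).1 (c b).2 ∂μ
      = ∑ b : Fin 4, mm σ μ (c a).1 (c b).1 (c a).2 (c b).2 := by
    intro a
    rw [integral_finset_sum _ (fun b _ => integrable_pair σ μ _ _ _ _)]
    rfl
  simp only [hinner] at h
  simp only [Fin.sum_univ_four, hc, Matrix.cons_val_zero, Matrix.cons_val_one,
    Matrix.head_cons, Matrix.cons_val_two, Matrix.tail_cons, Matrix.cons_val_three] at h
  -- kill the vanishing terms
  have z1 : mm σ μ u u u v = 0 := mm_vanish hleft (by simp [huv, huv.symm]) (by simp [huv, huv.symm])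
  have z2 : mm σ μ u v u u = 0 := mm_vanish hleft (by simp [huv, huv.symm]) (by simp [huv, huv.symm])
  have z3 : mm σ μ u u v u = 0 := mm_vanish hleft (by simp [huv, huv.symm]) (by simp [huv, huv.symm])
  have z4 : mm σ μ u u v v = 0 := mm_vanish hleft (by simp [huv, huv.symm]) (by simp [huv, huv.symm])
  have z5 : mm σ μ u v v v = 0 := mm_vanish hleft (by simp [huv, huv.symm]) (by simp [huv, huv.symm])
  have z6 : mm σ μ v u u u = 0 := mm_vanish hleft (by simp [huv, huv.symm]) (by simp [huv, huv.symm])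
  have z7 : mm σ μ v v u u = 0 := mm_vanish hleft (by simp [huv, huv.symm]) (by simp [huv, huv.symm])
  have z8 : mm σ μ v v u v = 0 := mm_vanish hleft (by simp [huv, huv.symm]) (by simp [huv, huv.symm])
  have z9 : mm σ μ v u v v = 0 := mm_vanish hleft (by simp [huv, huv.symm]) (by simp [huv, huv.symm])
  have z10 : mm σ μ v v v u = 0 := mm_vanish hleft (by simp [huv, huv.symm]) (by simp [huv, huv.symm])
  have p1 : mm σ μ v u u v = mm σ μ u v v u := by
    have := mm_perm (σ := σ) hleft (Equiv.swap u v) u v v u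
    simpa [Equiv.swap_apply_left, Equiv.swap_apply_right] using this.symm
  have p2 : mm σ μ v u v u = mm σ μ u v u v := by
    have := mm_perm (σ := σ) hleft (Equiv.swap u v) u v u v
    simpa [Equiv.swap_apply_left, Equiv.swap_apply_right] using this.symm
  have p3 : mm σ μ v v v v = mm σ μ u u u u := by
    have := mm_perm (σ := σ) hleft (Equiv.swap u v) u u u u
    simpa [Equiv.swap_apply_left, Equiv.swap_apply_right] using this.symm
  rw [z1, z2, z3, z4, z5, z6, z7, z8, z9, z10, p1, p2, p3] at h
  linear_combination 2 * h

end Core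

lemma exists_perm_two {i j u v : Fin d} (hij : i ≠ j) (huv : u ≠ v) :
    ∃ e : Equiv.Perm (Fin d), e i = u ∧ e j = v := by
  have hj' : (Equiv.swap i u) j ≠ u := by
    intro h
    exact hij ((Equiv.swap i u).injective ((Equiv.swap_apply_left i u).trans h.symm))
  refine ⟨(Equiv.swap i u).trans (Equiv.swap ((Equiv.swap i u) j) v), ?_, ?_⟩
  · rw [Equiv.trans_apply, Equiv.swap_apply_left,
      Equiv.swap_apply_of_ne_of_ne (Ne.symm hj') huv]
  · rw [Equiv.trans_apply, Equiv.swap_apply_left]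

lemma trace_rho (σ : Matrix (Fin d) (Fin d) ℂ) (U : UG d) : (rho σ U).trace = σ.trace := by
  rw [rho, Matrix.trace_mul_comm, ← Matrix.mul_assoc,
    Matrix.UnitaryGroup.star_mul_self, Matrix.one_mul]

lemma rho_mul_rho (σ : Matrix (Fin d) (Fin d) ℂ) (U : UG d) :
    rho σ U * rho σ U = rho (σ * σ) U := by
  have h := Matrix.UnitaryGroup.star_mul_self U
  simp only [rho, Matrix.mul_assoc]
  rw [show star (U : Matrix (Fin d) (Fin d) ℂ) * ((U : Matrix (Fin d) (Fin d) ℂ) *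
      (σ * star (U : Matrix (Fin d) (Fin d) ℂ))) = σ * star (U : Matrix (Fin d) (Fin d) ℂ) by
    rw [← Matrix.mul_assoc, h, Matrix.one_mul]]

lemma trace_eq_sum (M : Matrix (Fin d) (Fin d) ℂ) : M.trace = ∑ i, M i i := rfl

end HaarAux
section Main
open MeasureTheory Matrix

/-- **Haar variance of the cost landscape (Lemma 3)**. For the Haar probability
measure on `U(d)` (`d ≥ 2`) — characterized as a left- and right-invariant
Borel probability measure — a Hermitian observable `O`, and a Hermitian `σ` of
unit trace, the variance of `C_σ(U) = Tr[U σ U* O]` equals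
`(Tr[O²] - Tr[O]²/d)(Tr[σ²] - 1/d)/(d² - 1)`: it is proportional to the excess
purity `Tr[σ²] - 1/d`. -/
theorem haar_variance_cost
    (d : ℕ) (hd : 2 ≤ d)
    [MeasurableSpace (Matrix.unitaryGroup (Fin d) ℂ)]
    [BorelSpace (Matrix.unitaryGroup (Fin d) ℂ)]
    (μ : Measure (Matrix.unitaryGroup (Fin d) ℂ)) [IsProbabilityMeasure μ]
    (hleft : ∀ g : Matrix.unitaryGroup (Fin d) ℂ,
      μ.map (fun U => g * U) = μ)
    (hright : ∀ g : Matrix.unitaryGroup (Fin d) ℂ,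
      μ.map (fun U => U * g) = μ)
    (O : Matrix (Fin d) (Fin d) ℂ) (hO : O.IsHermitian)
    (σ : Matrix (Fin d) (Fin d) ℂ) (hσ : σ.IsHermitian) (hσtr : σ.trace = 1) :
    (∫ U : Matrix.unitaryGroup (Fin d) ℂ,
        ((U : Matrix (Fin d) (Fin d) ℂ) * σ * star (U : Matrix (Fin d) (Fin d) ℂ) * O).trace ^ 2 ∂μ) -
      (∫ U : Matrix.unitaryGroup (Fin d) ℂ,
        ((U : Matrix (Fin d) (Fin d) ℂ) * σ * star (U : Matrix (Fin d) (Fin d) ℂ) * O).trace ∂μ) ^ 2 =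
      ((O * O).trace - O.trace ^ 2 / d) * ((σ * σ).trace - 1 / (d : ℂ)) / ((d : ℂ) ^ 2 - 1) := by
  classical
  have hd0 : (d : ℂ) ≠ 0 := Nat.cast_ne_zero.mpr (by omega)
  have hd1 : (d : ℂ) ≠ 1 := by
    intro h
    have : d = 1 := by exact_mod_cast h
    omega
  have hdsq : (d : ℂ)^2 - 1 ≠ 0 := by
    have h1 : (d : ℂ) - 1 ≠ 0 := sub_ne_zero.mpr hd1
    have h2 : (d : ℂ) + 1 ≠ 0 := by
      intro h
      have h' : ((d + 1 : ℕ) : ℂ) = 0 := by push_cast; linear_combination h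
      have : d + 1 = 0 := by exact_mod_cast h'
      omega
    intro h
    exact (mul_ne_zero h1 h2) (by linear_combination h)
  set u : Fin d := ⟨0, by omega⟩ with hu
  set v : Fin d := ⟨1, by omega⟩ with hv
  have huv : u ≠ v := by simp [hu, hv, Fin.ext_iff]
  set A := mm σ μ u v u v with hA
  set B := mm σ μ u v v u with hB
  have key_rot : mm σ μ u u u u = A + B := mm_rot hleft huv
  have hdiag : ∀ i : Fin d, mm σ μ i i i i = A + B := by
    intro i
    rcases eq_or_ne i u with rfl | hi
    · exact key_rot
    · have h := mm_perm (σ := σ) hleft (Equiv.swap i u) i i i i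
      rw [Equiv.swap_apply_left] at h
      rw [h]; exact key_rot
  have ha : ∀ i j : Fin d, i ≠ j → mm σ μ i j i j = A := by
    intro i j hij
    obtain ⟨e, he1, he2⟩ := exists_perm_two hij huv
    have h := mm_perm (σ := σ) hleft e i j i j
    rw [he1, he2] at h
    exact h
  have hb : ∀ i j : Fin d, i ≠ j → mm σ μ i j j i = B := by
    intro i j hij
    obtain ⟨e, he1, he2⟩ := exists_perm_two hij huv
    have h := mm_perm (σ := σ) hleft e i j j i
    rw [he1, he2] at h
    exact h
  have hee : ∀ i : Fin d, ee σ μ i i = ee σ μ u u := by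
    intro i
    rcases eq_or_ne i u with rfl | hi
    · rfl
    · have h := ee_perm (σ := σ) hleft (Equiv.swap i u) i i
      rw [Equiv.swap_apply_left] at h
      exact h
  have htrρ : ∀ U : UG d, ∑ i, rho σ U i i = (1 : ℂ) := by
    intro U
    rw [← trace_eq_sum, trace_rho, hσtr]
  -- sum identity 1
  have hsum1 : ∑ i, ∑ j, mm σ μ i j i j = 1 := by
    have hswap : ∀ i : Fin d, ∑ j, mm σ μ i j i j
        = ∫ U, ∑ j, rho σ U i i * rho σ U j j ∂μ :=
      fun i => (integral_finset_sum _ (fun j _ => integrable_pair σ μ i j i j)).symm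
    simp only [hswap]
    rw [← integral_finset_sum _
      (fun i _ => integrable_finset_sum _ (fun j _ => integrable_pair σ μ i j i j))]
    have hpt : ∀ U : UG d, (∑ i, ∑ j, rho σ U i i * rho σ U j j) = (1:ℂ) := by
      intro U
      rw [← Finset.sum_mul_sum, htrρ U]
      ring
    simp only [hpt]
    simp
  -- sum identity 2
  have hsum2 : ∑ i, ∑ j, mm σ μ i j j i = (σ * σ).trace := by
    have hswap : ∀ i : Fin d, ∑ j, mm σ μ i j j i
        = ∫ U, ∑ j, rho σ U i j * rho σ U j i ∂μ :=
      fun i => (integral_finset_sum _ (fun j _ => integrable_pair σ μ i j j i)).symm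
    simp only [hswap]
    rw [← integral_finset_sum _
      (fun i _ => integrable_finset_sum _ (fun j _ => integrable_pair σ μ i j j i))]
    have hpt : ∀ U : UG d, (∑ i, ∑ j, rho σ U i j * rho σ U j i) = (σ * σ).trace := by
      intro U
      have h1 : ∑ i, ∑ j, rho σ U i j * rho σ U j i = (rho σ U * rho σ U).trace := by
        rw [trace_eq_sum]
        exact Finset.sum_congr rfl fun i _ => by rw [Matrix.mul_apply]
      rw [h1, rho_mul_rho, trace_rho]
    simp only [hpt]
    rw [integral_const]
    simp
  -- linear equations
  have hrow1 : ∀ i : Fin d, ∑ j, mm σ μ i j i j = (d : ℂ) * A + B := by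
    intro i
    have h : ∀ j : Fin d, mm σ μ i j i j = A + (if i = j then B else 0) := by
      intro j
      by_cases hij : i = j
      · subst hij; rw [hdiag i, if_pos rfl]
      · rw [ha i j hij, if_neg hij, add_zero]
    simp only [h]
    rw [Finset.sum_add_distrib, Finset.sum_const, Finset.sum_ite_eq]
    simp [Fintype.card_fin, nsmul_eq_mul]
  have hrow2 : ∀ i : Fin d, ∑ j, mm σ μ i j j i = (d : ℂ) * B + A := by
    intro i
    have h : ∀ j : Fin d, mm σ μ i j j i = B + (if i = j then A else 0) := by
      intro j
      by_cases hij : i = j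
      · subst hij; rw [hdiag i, if_pos rfl]; ring
      · rw [hb i j hij, if_neg hij, add_zero]
    simp only [h]
    rw [Finset.sum_add_distrib, Finset.sum_const, Finset.sum_ite_eq]
    simp [Fintype.card_fin, nsmul_eq_mul]
  have e1 : (d : ℂ)^2 * A + (d : ℂ) * B = 1 := by
    rw [← hsum1]
    simp only [hrow1]
    rw [Finset.sum_const]
    simp [Fintype.card_fin, nsmul_eq_mul]
    ring
  have e2 : (d : ℂ)^2 * B + (d : ℂ) * A = (σ * σ).trace := by
    rw [← hsum2]
    simp only [hrow2]
    rw [Finset.sum_const]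
    simp [Fintype.card_fin, nsmul_eq_mul]
    ring
  -- first moment
  have heesum : ∑ i, ee σ μ i i = 1 := by
    rw [show (fun i : Fin d => ee σ μ i i) = fun i => ∫ U, rho σ U i i ∂μ from rfl]
    rw [← integral_finset_sum _ (fun i _ => integrable_single σ μ i i)]
    simp only [htrρ]
    simp
  have hc0 : (d : ℂ) * ee σ μ u u = 1 := by
    rw [← heesum]
    rw [Finset.sum_congr rfl (fun i _ => hee i), Finset.sum_const]
    simp [Fintype.card_fin, nsmul_eq_mul]
  have hc0' : ee σ μ u u = 1 / (d : ℂ) := by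
    rw [eq_div_iff hd0]
    linear_combination hc0
  -- trace as product-type sum
  have hpt1 : ∀ U : UG d, (rho σ U * O).trace
      = ∑ p : Fin d × Fin d, rho σ U p.1 p.2 * O p.2 p.1 := by
    intro U
    rw [trace_eq_sum, Fintype.sum_prod_type]
    exact Finset.sum_congr rfl fun i _ => by rw [Matrix.mul_apply]
  -- first integral
  have hI1 : ∫ U, (rho σ U * O).trace ∂μ = ee σ μ u u * O.trace := by
    simp only [hpt1]
    rw [integral_finset_sum _ (fun p _ => (integrable_single σ μ p.1 p.2).mul_const _)]
    have h2 : ∀ p : Fin d × Fin d, ∫ U, rho σ U p.1 p.2 * O p.2 p.1 ∂μ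
        = ee σ μ p.1 p.2 * O p.2 p.1 := fun p => integral_mul_const _ _
    simp only [h2]
    have h3 : ∀ p : Fin d × Fin d, ee σ μ p.1 p.2 * O p.2 p.1
        = if p.2 = p.1 then ee σ μ u u * O p.2 p.1 else 0 := by
      intro p
      by_cases h : p.2 = p.1
      · rw [if_pos h, h, hee p.1]
      · rw [if_neg h, ee_vanish hleft (fun hh => h hh.symm), zero_mul]
    simp only [h3]
    rw [Fintype.sum_prod_type]
    simp only [Finset.sum_ite_eq' Finset.univ, Finset.mem_univ, if_true]
    rw [← Finset.mul_sum, ← trace_eq_sum]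
  -- second integral
  have hI2 : ∫ U, (rho σ U * O).trace ^ 2 ∂μ
      = A * O.trace ^ 2 + B * (O * O).trace := by
    have hpt2 : ∀ U : UG d, (rho σ U * O).trace ^ 2
        = ∑ p : Fin d × Fin d, ∑ q : Fin d × Fin d,
            (rho σ U p.1 p.2 * rho σ U q.1 q.2) * (O p.2 p.1 * O q.2 q.1) := by
      intro U
      rw [sq, hpt1 U, Finset.sum_mul_sum]
      exact Finset.sum_congr rfl fun p _ => Finset.sum_congr rfl fun q _ => by ring
    simp only [hpt2]
    rw [integral_finset_sum _ (fun p _ => integrable_finset_sum _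
      (fun q _ => (integrable_pair σ μ p.1 q.1 p.2 q.2).mul_const _))]
    have h1 : ∀ p : Fin d × Fin d, ∫ U, ∑ q : Fin d × Fin d,
        (rho σ U p.1 p.2 * rho σ U q.1 q.2) * (O p.2 p.1 * O q.2 q.1) ∂μ
        = ∑ q : Fin d × Fin d, mm σ μ p.1 q.1 p.2 q.2 * (O p.2 p.1 * O q.2 q.1) := by
      intro p
      rw [integral_finset_sum _ (fun q _ => (integrable_pair σ μ p.1 q.1 p.2 q.2).mul_const _)]
      exact Finset.sum_congr rfl fun q _ => integral_mul_const _ _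
    simp only [h1]
    have hdecomp : ∀ p q : Fin d × Fin d, mm σ μ p.1 q.1 p.2 q.2
        = (if p.2 = p.1 ∧ q.2 = q.1 then A else 0)
          + (if p.2 = q.1 ∧ q.2 = p.1 then B else 0) := by
      intro p q
      by_cases c1 : p.2 = p.1 ∧ q.2 = q.1 <;> by_cases c2 : p.2 = q.1 ∧ q.2 = p.1
      · rw [if_pos c1, if_pos c2]
        obtain ⟨h1, h2⟩ := c1
        obtain ⟨h3, h4⟩ := c2
        rw [h1, h2, h3.symm.trans h1]
        exact hdiag p.1
      · rw [if_pos c1, if_neg c2, add_zero]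
        obtain ⟨h1, h2⟩ := c1
        rw [h1, h2]
        refine ha p.1 q.1 fun hpq => c2 ⟨h1.trans hpq, h2.trans hpq.symm⟩
      · rw [if_neg c1, if_pos c2, zero_add]
        obtain ⟨h3, h4⟩ := c2
        rw [h3, h4]
        refine hb p.1 q.1 fun hpq => c1 ⟨h3.trans hpq.symm, h4.trans hpq⟩
      · rw [if_neg c1, if_neg c2, add_zero]
        exact mm_vanish hleft c1 c2
    simp only [hdecomp, add_mul, Finset.sum_add_distrib]
    have hT1 : ∑ p : Fin d × Fin d, ∑ q : Fin d × Fin d,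
        (if p.2 = p.1 ∧ q.2 = q.1 then A else 0) * (O p.2 p.1 * O q.2 q.1)
        = A * O.trace ^ 2 := by
      have hsplit : ∀ p q : Fin d × Fin d,
          (if p.2 = p.1 ∧ q.2 = q.1 then A else 0) * (O p.2 p.1 * O q.2 q.1)
          = (if p.2 = p.1 then A * O p.2 p.1 else 0) * (if q.2 = q.1 then O q.2 q.1 else 0) := by
        intro p q
        by_cases d1 : p.2 = p.1 <;> by_cases d2 : q.2 = q.1 <;> simp [d1, d2] <;> ring
      simp only [hsplit]
      rw [← Finset.sum_mul_sum]
      have hf1 : ∑ p : Fin d × Fin d, (if p.2 = p.1 then A * O p.2 p.1 else 0)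
          = A * O.trace := by
        rw [Fintype.sum_prod_type]
        simp only [Finset.sum_ite_eq' Finset.univ, Finset.mem_univ, if_true]
        rw [← Finset.mul_sum, ← trace_eq_sum]
      have hf2 : ∑ q : Fin d × Fin d, (if q.2 = q.1 then O q.2 q.1 else 0) = O.trace := by
        rw [Fintype.sum_prod_type]
        simp only [Finset.sum_ite_eq' Finset.univ, Finset.mem_univ, if_true]
        rw [← trace_eq_sum]
      rw [hf1, hf2]
      ring
    have hT2 : ∑ p : Fin d × Fin d, ∑ q : Fin d × Fin d,
        (if p.2 = q.1 ∧ q.2 = p.1 then B else 0) * (O p.2 p.1 * O q.2 q.1)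
        = B * (O * O).trace := by
      have hinner : ∀ p : Fin d × Fin d, ∑ q : Fin d × Fin d,
          (if p.2 = q.1 ∧ q.2 = p.1 then B else 0) * (O p.2 p.1 * O q.2 q.1)
          = B * (O p.2 p.1 * O p.1 p.2) := by
        intro p
        have hcond : ∀ q : Fin d × Fin d,
            (if p.2 = q.1 ∧ q.2 = p.1 then B else 0) * (O p.2 p.1 * O q.2 q.1)
            = if q = (p.2, p.1) then B * (O p.2 p.1 * O q.2 q.1) else 0 := by
          intro q
          by_cases h : q = (p.2, p.1)
          · subst h
            simp
          · rw [if_neg h, if_neg, zero_mul]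
            intro hc
            exact h (Prod.ext hc.1.symm hc.2)
        simp only [hcond]
        rw [Finset.sum_ite_eq' Finset.univ]
        simp
      simp only [hinner]
      have htr2 : ∑ p : Fin d × Fin d, B * (O p.2 p.1 * O p.1 p.2) = B * (O * O).trace := by
        rw [← Finset.mul_sum]
        congr 1
        rw [trace_eq_sum, Fintype.sum_prod_type]
        rw [Finset.sum_comm]
        refine Finset.sum_congr rfl fun j _ => ?_
        rw [Matrix.mul_apply]
      exact htr2
    rw [hT1, hT2]
  -- assemble
  have hrw2 : (∫ U : UG d, ((U : Matrix (Fin d) (Fin d) ℂ) * σ *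
      star (U : Matrix (Fin d) (Fin d) ℂ) * O).trace ^ 2 ∂μ)
      = ∫ U, (rho σ U * O).trace ^ 2 ∂μ := rfl
  have hrw1 : (∫ U : UG d, ((U : Matrix (Fin d) (Fin d) ℂ) * σ *
      star (U : Matrix (Fin d) (Fin d) ℂ) * O).trace ∂μ)
      = ∫ U, (rho σ U * O).trace ∂μ := rfl
  rw [hrw1, hrw2, hI1, hI2, hc0']
  have hAval : A = ((d : ℂ) - (σ * σ).trace) / ((d : ℂ) * ((d : ℂ)^2 - 1)) := by
    rw [eq_div_iff (mul_ne_zero hd0 hdsq)]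
    linear_combination (d : ℂ) * e1 - e2
  have hBval : B = ((d : ℂ) * (σ * σ).trace - 1) / ((d : ℂ) * ((d : ℂ)^2 - 1)) := by
    rw [eq_div_iff (mul_ne_zero hd0 hdsq)]
    linear_combination (d : ℂ) * e2 - e1
  rw [hAval, hBval]
  field_simp
  ring
end Main
end

section
/- Let a > 1, let p ∈ [0,1) with a·p ≤ 1, let L be a natural number, and let c > 0. Define r = (1 − a·p)^L / (1 − p)^L. Then 0 ≤ r ≤ 1 and (c − r)² / (c² + 1) ≤ 1. Consequently, for Zero Noise Extrapolation with two noise levels under L instances of global depolarizing noise with error probability p boosted to a·p — where the mitigated-to-noisy relative resolvability satisfies χ ≤ (c − r)²/(c² + 1) with c = a for Richardson extrapolation, c = a·r(ε)^{t(ε)}/r(aε)^{t(aε)} for exponential extrapolation, and c = a^{−(L+1)} for NIBP extrapolation — the relative resolvability satisfies χ ≤ 1. -/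
/-- **Proposition 1** (relative resolvability of Zero Noise Extrapolation with two
noise levels under global depolarizing noise). With `r = (1 - a p)^L / (1 - p)^L`
one has `0 ≤ r ≤ 1` and `(c - r)² / (c² + 1) ≤ 1`; consequently any relative
resolvability `χ` bounded by `(c - r)²/(c² + 1)` satisfies `χ ≤ 1`. Here `c = a`
for Richardson extrapolation, `c = a r(ε)^{t(ε)}/r(aε)^{t(aε)}` for exponential
extrapolation and `c = a^{-(L+1)}` for NIBP extrapolation. -/
theorem zne_two_levels_global_depolarizing
    (a p : ℝ) (ha : 1 < a) (hp0 : 0 ≤ p) (hp1 : p < 1) (hap : a * p ≤ 1)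
    (L : ℕ) (c : ℝ) (hc : 0 < c) :
    0 ≤ (1 - a * p) ^ L / (1 - p) ^ L ∧
    (1 - a * p) ^ L / (1 - p) ^ L ≤ 1 ∧
    (c - (1 - a * p) ^ L / (1 - p) ^ L) ^ 2 / (c ^ 2 + 1) ≤ 1 ∧
    ∀ χ : ℝ, χ ≤ (c - (1 - a * p) ^ L / (1 - p) ^ L) ^ 2 / (c ^ 2 + 1) → χ ≤ 1 := by
  have h1 : (0:ℝ) ≤ 1 - a * p := by linarith
  have h2 : (0:ℝ) < 1 - p := by linarith
  have hr0 : 0 ≤ (1 - a * p) ^ L / (1 - p) ^ L :=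
    div_nonneg (pow_nonneg h1 L) (pow_nonneg h2.le L)
  have hr1 : (1 - a * p) ^ L / (1 - p) ^ L ≤ 1 := by
    rw [div_le_one (pow_pos h2 L)]
    exact pow_le_pow_left₀ h1 (by nlinarith) L
  set r := (1 - a * p) ^ L / (1 - p) ^ L with hr
  have hkey : (c - r) ^ 2 / (c ^ 2 + 1) ≤ 1 := by
    rw [div_le_one (by positivity)]
    nlinarith [mul_nonneg hc.le hr0]
  exact ⟨hr0, hr1, hkey, fun χ hχ => hχ.trans hkey⟩
end

section
/- Let a₂ > a₁ > 1 be real numbers and let r₁, r₂ be real numbers with 0 ≤ r₂ ≤ r₁ ≤ 1. Then ( a₁a₂(a₂ − a₁) − a₂(a₂ − 1)·r₁ + a₁(a₁ − 1)·r₂ )² ≤ a₁²a₂²(a₂ − a₁)² + a₂²(a₂ − 1)² + a₁²(a₁ − 1)². Consequently, for Richardson extrapolation with three noise levels ε < a₁ε < a₂ε, if the averaged noisy cost differences satisfy z₁ = ⟨ΔC̃(a₁ε)⟩/⟨ΔC̃(ε)⟩ and z₂ = ⟨ΔC̃(a₂ε)⟩/⟨ΔC̃(ε)⟩ with 0 ≤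 z₂ ≤ z₁ ≤ 1, then the average relative resolvability satisfies χ̄ ≤ 1. -/
/-- **Richardson extrapolation with three noise levels** (Appendix D). For
`a₂ > a₁ > 1` and `0 ≤ r₂ ≤ r₁ ≤ 1` (the ratios `z₁, z₂` of averaged noisy cost
differences at the boosted noise levels to the base level), the square of the
mitigated averaged cost-difference numerator is bounded by the error-mitigation
cost numerator, so the average relative resolvability is at most 1. -/
theorem richardson_three_levels_average_resolvability
    (a₁ a₂ r₁ r₂ : ℝ) (ha₁ : 1 < a₁) (ha₂ : a₁ < a₂)
    (hr₂ : 0 ≤ r₂) (hr₂₁ : r₂ ≤ r₁) (hr₁ : r₁ ≤ 1) :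
    (a₁ * a₂ * (a₂ - a₁) - a₂ * (a₂ - 1) * r₁ + a₁ * (a₁ - 1) * r₂) ^ 2 ≤
      a₁ ^ 2 * a₂ ^ 2 * (a₂ - a₁) ^ 2 + a₂ ^ 2 * (a₂ - 1) ^ 2 + a₁ ^ 2 * (a₁ - 1) ^ 2 ∧
    (a₁ * a₂ * (a₂ - a₁) - a₂ * (a₂ - 1) * r₁ + a₁ * (a₁ - 1) * r₂) ^ 2 /
        (a₁ ^ 2 * a₂ ^ 2 * (a₂ - a₁) ^ 2 + a₂ ^ 2 * (a₂ - 1) ^ 2 + a₁ ^ 2 * (a₁ - 1) ^ 2) ≤ 1 := by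
  set A := a₁ * a₂ * (a₂ - a₁) with hA
  set B := a₂ * (a₂ - 1) with hB
  set C := a₁ * (a₁ - 1) with hC
  have hApos : 0 < A := by
    apply mul_pos (mul_pos (by linarith) (by linarith)); linarith
  have hBpos : 0 < B := by apply mul_pos (by linarith); linarith
  have hCpos : 0 < C := by apply mul_pos (by linarith); linarith
  have hBC : C ≤ B := by
    rw [hB, hC]; nlinarith
  set E := A - B * r₁ + C * r₂ with hE
  have hEup : E ≤ A := by
    have : C * r₂ ≤ B * r₁ := by
      calc C * r₂ ≤ C * r₁ := by nlinarith
        _ ≤ B * r₁ := by nlinarith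
    linarith
  have hElow : A - B ≤ E := by
    have h1 : B * r₁ ≤ B := by nlinarith
    nlinarith
  have hkey : E ^ 2 ≤ A ^ 2 + B ^ 2 + C ^ 2 := by nlinarith [sq_nonneg C]
  have hrw : A ^ 2 + B ^ 2 + C ^ 2 =
      a₁ ^ 2 * a₂ ^ 2 * (a₂ - a₁) ^ 2 + a₂ ^ 2 * (a₂ - 1) ^ 2 + a₁ ^ 2 * (a₁ - 1) ^ 2 := by
    rw [hA, hB, hC]; ring
  have hkey' : E ^ 2 ≤
      a₁ ^ 2 * a₂ ^ 2 * (a₂ - a₁) ^ 2 + a₂ ^ 2 * (a₂ - 1) ^ 2 + a₁ ^ 2 * (a₁ - 1) ^ 2 := by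
    rw [← hrw]; exact hkey
  have hden : 0 < a₁ ^ 2 * a₂ ^ 2 * (a₂ - a₁) ^ 2 + a₂ ^ 2 * (a₂ - 1) ^ 2 + a₁ ^ 2 * (a₁ - 1) ^ 2 := by
    rw [← hrw]; positivity
  exact ⟨hkey', (div_le_one hden).mpr hkey'⟩
end

section
/- Let d ≥ 2 and let λ ∈ ℝ^d be a probability vector (λᵢ ≥ 0, Σᵢ λᵢ = 1) with purity P = Σᵢ λᵢ² satisfying P > 1/d. For a natural number M ≥ 1 define f(M) = Σᵢ λᵢ^{2M} − (1/d)·(Σᵢ λᵢ^M)². Then f(M) ≤ (1 − 1/d)·P^M, and consequently f(M)/f(1) ≤ (1 − 1/d)·P^M / (P − 1/d). -/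
open Finset

private lemma sum_pow_le_pow_sum' {d : ℕ} (a : Fin d → ℝ) (ha : ∀ i, 0 ≤ a i)
    {M : ℕ} (hM : 1 ≤ M) : ∑ i, a i ^ M ≤ (∑ i, a i) ^ M := by
  obtain ⟨n, rfl⟩ := Nat.exists_eq_add_of_le hM
  have hS : ∀ i : Fin d, a i ≤ ∑ j, a j := fun i =>
    Finset.single_le_sum (fun j _ => ha j) (mem_univ i)
  calc ∑ i, a i ^ (1 + n) ≤ ∑ i, a i * (∑ j, a j) ^ n := by
        apply Finset.sum_le_sum
        intro i _
        rw [pow_add, pow_one]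
        exact mul_le_mul_of_nonneg_left (pow_le_pow_left₀ (ha i) (hS i) n) (ha i)
    _ = (∑ i, a i) ^ (1 + n) := by rw [pow_add, pow_one, ← Finset.sum_mul]

/-- **High-purity bound in Proposition 4** (average relative resolvability of
Virtual Distillation). For a probability vector `λ` on `d ≥ 2` outcomes with
purity `P = Σᵢ λᵢ² > 1/d`, the quantity
`f(M) = Σᵢ λᵢ^{2M} - (1/d)(Σᵢ λᵢ^M)²` satisfies `f(M) ≤ (1 - 1/d) P^M`, and
hence `f(M)/f(1) ≤ (1 - 1/d) P^M / (P - 1/d)`. -/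
theorem virtual_distillation_high_purity_bound
    (d : ℕ) (hd : 2 ≤ d) (lam : Fin d → ℝ)
    (hpos : ∀ i, 0 ≤ lam i) (hsum : ∑ i, lam i = 1)
    (hP : 1 / (d : ℝ) < ∑ i, lam i ^ 2)
    (M : ℕ) (hM : 1 ≤ M) :
    (∑ i, lam i ^ (2 * M)) - (1 / (d : ℝ)) * (∑ i, lam i ^ M) ^ 2 ≤
      (1 - 1 / (d : ℝ)) * (∑ i, lam i ^ 2) ^ M ∧
    ((∑ i, lam i ^ (2 * M)) - (1 / (d : ℝ)) * (∑ i, lam i ^ M) ^ 2) /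
        ((∑ i, lam i ^ (2 * 1)) - (1 / (d : ℝ)) * (∑ i, lam i ^ 1) ^ 2) ≤
      (1 - 1 / (d : ℝ)) * (∑ i, lam i ^ 2) ^ M /
        ((∑ i, lam i ^ 2) - 1 / (d : ℝ)) := by
  have hd0 : (0 : ℝ) < d := by positivity
  have hdinv : (0 : ℝ) ≤ 1 / (d : ℝ) := by positivity
  have hdinv1 : 1 / (d : ℝ) ≤ 1 := by
    rw [div_le_one hd0]; exact_mod_cast Nat.one_le_of_lt hd
  -- Σ λ^{2M} = Σ (λ²)^M ≤ P^M
  have h1 : ∑ i, lam i ^ (2 * M) ≤ (∑ i, lam i ^ 2) ^ M := by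
    have := sum_pow_le_pow_sum' (fun i => lam i ^ 2) (fun i => sq_nonneg _) hM
    simpa [← pow_mul] using this
  -- Σ λ^{2M} ≤ (Σ λ^M)²
  have h2 : ∑ i, lam i ^ (2 * M) ≤ (∑ i, lam i ^ M) ^ 2 := by
    have := Finset.sum_sq_le_sq_sum_of_nonneg
      (f := fun i => lam i ^ M) (s := univ) (fun i _ => pow_nonneg (hpos i) M)
    simpa [← pow_mul, mul_comm] using this
  have key : (∑ i, lam i ^ (2 * M)) - (1 / (d : ℝ)) * (∑ i, lam i ^ M) ^ 2 ≤
      (1 - 1 / (d : ℝ)) * (∑ i, lam i ^ 2) ^ M := by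
    calc (∑ i, lam i ^ (2 * M)) - (1 / (d : ℝ)) * (∑ i, lam i ^ M) ^ 2
        ≤ (∑ i, lam i ^ (2 * M)) - (1 / (d : ℝ)) * (∑ i, lam i ^ (2 * M)) := by
          nlinarith
      _ = (1 - 1 / (d : ℝ)) * ∑ i, lam i ^ (2 * M) := by ring
      _ ≤ (1 - 1 / (d : ℝ)) * (∑ i, lam i ^ 2) ^ M := by
          apply mul_le_mul_of_nonneg_left h1; linarith
  refine ⟨key, ?_⟩
  have hden : (∑ i, lam i ^ (2 * 1)) - (1 / (d : ℝ)) * (∑ i, lam i ^ 1) ^ 2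
      = (∑ i, lam i ^ 2) - 1 / (d : ℝ) := by
    simp [hsum]
  rw [hden]
  exact div_le_div_of_nonneg_right key (by linarith) |>.trans_eq rfl
end

section
/- Let d ≥ 2 and let λ ∈ ℝ^d be a probability vector (λᵢ ≥ 0, Σᵢ λᵢ = 1) whose largest and smallest entries satisfy max_i λᵢ − min_i λᵢ = 2b for some b ≥ 0. Then the purity satisfies Σᵢ λᵢ² ≥ 1/d + 2b², and hence b ≤ √( (Σᵢ λᵢ² − 1/d) / 2 ). -/
open Finset

/-- **Spread-versus-purity bound in the proof of Proposition 4**. If the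
eigenvalue spectrum `λ` of a `d`-dimensional state has largest and smallest
entries differing by `2b`, then its purity is at least `1/d + 2b²`, whence
`b ≤ √((P - 1/d)/2)`. -/
theorem spectrum_spread_purity_bound
    (d : ℕ) (hd : 2 ≤ d) (lam : Fin d → ℝ) (b : ℝ) (hb : 0 ≤ b)
    (hpos : ∀ i, 0 ≤ lam i) (hsum : ∑ i, lam i = 1)
    (imax imin : Fin d)
    (hmax : ∀ k, lam k ≤ lam imax) (hmin : ∀ k, lam imin ≤ lam k)
    (hspread : lam imax - lam imin = 2 * b) :
    1 / (d : ℝ) + 2 * b ^ 2 ≤ ∑ i, lam i ^ 2 ∧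
    b ≤ Real.sqrt (((∑ i, lam i ^ 2) - 1 / (d : ℝ)) / 2) := by
  have hd0 : (0:ℝ) < d := by positivity
  have hdecomp : ∑ i, lam i ^ 2 = (∑ i, (lam i - 1/(d:ℝ))^2) + 1/(d:ℝ) := by
    have h1 : ∑ i, (lam i - 1/(d:ℝ))^2
        = ∑ i, (lam i ^2 - 2/(d:ℝ) * lam i + 1/(d:ℝ)^2) := by
      apply Finset.sum_congr rfl; intro i _; ring
    rw [h1, Finset.sum_add_distrib, Finset.sum_sub_distrib, ← Finset.mul_sum, hsum,
      Finset.sum_const, Finset.card_univ, Fintype.card_fin, nsmul_eq_mul]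
    field_simp
    ring
  have hmu : 2 * b ^ 2 ≤ ∑ i, (lam i - 1/(d:ℝ))^2 := by
    rcases eq_or_lt_of_le hb with hb0 | hb0
    · have : (0:ℝ) ≤ ∑ i, (lam i - 1/(d:ℝ))^2 := by positivity
      nlinarith
    · have hne : imax ≠ imin := by
        intro h; rw [h] at hspread; simp at hspread; nlinarith
      have hsub : ({imax, imin} : Finset (Fin d)) ⊆ Finset.univ := by
        intro x _; exact Finset.mem_univ x
      have hle : ∑ i ∈ ({imax, imin} : Finset (Fin d)), (lam i - 1/(d:ℝ))^2
          ≤ ∑ i, (lam i - 1/(d:ℝ))^2 := by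
        apply Finset.sum_le_sum_of_subset_of_nonneg hsub
        intro i _ _; positivity
      rw [Finset.sum_pair hne] at hle
      have h4 : (lam imax - lam imin)^2 = 4 * b^2 := by rw [hspread]; ring
      have h5 : 2 * b ^ 2 ≤ (lam imax - 1/(d:ℝ))^2 + (lam imin - 1/(d:ℝ))^2 := by
        nlinarith [h4, sq_nonneg (lam imax + lam imin - 2 * (1/(d:ℝ)))]
      linarith [hle, h5]
  have h1 : 1 / (d : ℝ) + 2 * b ^ 2 ≤ ∑ i, lam i ^ 2 := by
    rw [hdecomp]; linarith
  refine ⟨h1, ?_⟩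
  rw [Real.le_sqrt hb]
  all_goals linarith [sq_nonneg b]
end

section
/- Let d ≥ 2 and k ≥ 1 be natural numbers, let b ≥ 0, and let μ ∈ ℝ^d be a vector with Σᵢ μᵢ = 0 and max_i μᵢ − min_i μᵢ = 2b. Then |max_i μᵢ|^k + |min_i μᵢ|^k ≤ (2b)^k·[ ((d−1)/d)^k + (1/d)^k ]. In particular, (max_i μᵢ)^k − (min_i μᵢ)^k ≤ (2b)^k·[ ((d−1)/d)^k + (1/d)^k ]. -/
open Finset

lemma aux_pow_extremal (k : ℕ) {a y x A : ℝ} (ha : 0 ≤ a) (hay : a ≤ y)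
    (hyx : y ≤ x) (hxA : x ≤ A) (hs : x + y = A + a) :
    x ^ k + y ^ k ≤ A ^ k + a ^ k := by
  have h1 : y ^ k - a ^ k = (∑ i ∈ range k, y ^ i * a ^ (k - 1 - i)) * (y - a) :=
    (geom_sum₂_mul y a k).symm
  have h2 : A ^ k - x ^ k = (∑ i ∈ range k, A ^ i * x ^ (k - 1 - i)) * (A - x) :=
    (geom_sum₂_mul A x k).symm
  have hy0 : 0 ≤ y := ha.trans hay
  have hsumle : (∑ i ∈ range k, y ^ i * a ^ (k - 1 - i)) ≤
      ∑ i ∈ range k, A ^ i * x ^ (k - 1 - i) := by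
    apply Finset.sum_le_sum
    intro i _
    exact mul_le_mul (pow_le_pow_left₀ hy0 (hyx.trans hxA) i)
      (pow_le_pow_left₀ ha (hay.trans hyx) _) (pow_nonneg ha _)
      (pow_nonneg (hy0.trans (hyx.trans hxA)) i)
  have hYA : y - a = A - x := by linarith
  have hpos : 0 ≤ A - x := by linarith
  have h3 : (∑ i ∈ range k, y ^ i * a ^ (k - 1 - i)) * (y - a) ≤
      (∑ i ∈ range k, A ^ i * x ^ (k - 1 - i)) * (A - x) := by
    rw [hYA]; exact mul_le_mul_of_nonneg_right hsumle hpos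
  linarith

/-- **Extremal bound on powers of a shifted spectrum** (proof of Proposition 4).
If `μ ∈ ℝ^d` sums to zero and its largest and smallest entries differ by `2b`,
then for every `k ≥ 1`,
`|max μ|^k + |min μ|^k ≤ (2b)^k [((d-1)/d)^k + (1/d)^k]`, and in particular
`(max μ)^k - (min μ)^k` obeys the same bound. -/
theorem shifted_spectrum_power_bound
    (d k : ℕ) (hd : 2 ≤ d) (hk : 1 ≤ k) (b : ℝ) (hb : 0 ≤ b)
    (μ : Fin d → ℝ) (hsum : ∑ i, μ i = 0)
    (imax imin : Fin d)
    (hmax : ∀ j, μ j ≤ μ imax) (hmin : ∀ j, μ imin ≤ μ j)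
    (hspread : μ imax - μ imin = 2 * b) :
    |μ imax| ^ k + |μ imin| ^ k ≤
      (2 * b) ^ k * (((d - 1 : ℝ) / d) ^ k + (1 / (d : ℝ)) ^ k) ∧
    (μ imax) ^ k - (μ imin) ^ k ≤
      (2 * b) ^ k * (((d - 1 : ℝ) / d) ^ k + (1 / (d : ℝ)) ^ k) := by
  set M := μ imax with hMdef
  set m := μ imin with hmdef
  have hd2 : (2:ℝ) ≤ (d:ℝ) := by exact_mod_cast hd
  have hdpos : (0:ℝ) < (d:ℝ) := by linarith
  -- M ≥ 0
  have hMub : ∑ i, μ i ≤ (d:ℝ) * M := by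
    have := Finset.sum_le_card_nsmul Finset.univ μ M (fun i _ => hmax i)
    simpa [nsmul_eq_mul] using this
  have hM0 : 0 ≤ M := by rw [hsum] at hMub; nlinarith
  -- m ≤ 0
  have hmlb : (d:ℝ) * m ≤ ∑ i, μ i := by
    have := Finset.card_nsmul_le_sum Finset.univ μ m (fun i _ => hmin i)
    simpa [nsmul_eq_mul] using this
  have hm0 : m ≤ 0 := by rw [hsum] at hmlb; nlinarith
  -- erase sums
  have h1d : 1 ≤ d := by omega
  have hcard_erase : ((Finset.univ.erase imax).card : ℝ) = (d:ℝ) - 1 := by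
    rw [Finset.card_erase_of_mem (Finset.mem_univ _)]
    rw [Finset.card_fin, Nat.cast_sub h1d, Nat.cast_one]
  have hcard_erase' : ((Finset.univ.erase imin).card : ℝ) = (d:ℝ) - 1 := by
    rw [Finset.card_erase_of_mem (Finset.mem_univ _)]
    rw [Finset.card_fin, Nat.cast_sub h1d, Nat.cast_one]
  have hsum_erase : ∑ i ∈ Finset.univ.erase imax, μ i = -M := by
    have := Finset.add_sum_erase Finset.univ μ (Finset.mem_univ imax)
    rw [hsum] at this; linarith [this]
  have hsum_erase' : ∑ i ∈ Finset.univ.erase imin, μ i = -m := by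
    have := Finset.add_sum_erase Finset.univ μ (Finset.mem_univ imin)
    rw [hsum] at this; linarith [this]
  have h1 : ((d:ℝ) - 1) * m ≤ -M := by
    have := Finset.card_nsmul_le_sum (Finset.univ.erase imax) μ m (fun i _ => hmin i)
    rw [hsum_erase] at this
    calc ((d:ℝ) - 1) * m = ((Finset.univ.erase imax).card : ℝ) * m := by rw [hcard_erase]
    _ ≤ -M := by simpa [nsmul_eq_mul] using this
  have h2 : -m ≤ ((d:ℝ) - 1) * M := by
    have := Finset.sum_le_card_nsmul (Finset.univ.erase imin) μ M (fun i _ => hmax i)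
    rw [hsum_erase'] at this
    calc -m ≤ ((Finset.univ.erase imin).card : ℝ) * M := by
          simpa [nsmul_eq_mul] using this
    _ = ((d:ℝ) - 1) * M := by rw [hcard_erase']
  set A : ℝ := 2 * b * (((d:ℝ) - 1) / d) with hAdef
  set a : ℝ := 2 * b * (1 / (d:ℝ)) with hadef
  have ha0 : 0 ≤ a := by positivity
  have hAa : A + a = 2 * b := by
    rw [hAdef, hadef]; field_simp; ring
  have hMA : M ≤ A := by
    rw [hAdef, show 2 * b * (((d:ℝ) - 1) / d) = (2 * b * ((d:ℝ) - 1)) / d by ring,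
      le_div_iff₀ hdpos]
    nlinarith
  have hmA : -m ≤ A := by
    rw [hAdef, show 2 * b * (((d:ℝ) - 1) / d) = (2 * b * ((d:ℝ) - 1)) / d by ring,
      le_div_iff₀ hdpos]
    nlinarith
  have key : M ^ k + (-m) ^ k ≤ A ^ k + a ^ k := by
    rcases le_total (-m) M with hcase | hcase
    · have := aux_pow_extremal k ha0 (show a ≤ -m by linarith) hcase hMA
        (by linarith)
      linarith
    · have := aux_pow_extremal k ha0 (show a ≤ M by linarith) hcase hmA
        (by linarith)
      linarith
  have hRHS : A ^ k + a ^ k = (2 * b) ^ k * (((d:ℝ) - 1) / d) ^ k + (2 * b) ^ k * (1 / (d:ℝ)) ^ k := by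
    rw [hAdef, hadef, mul_pow (2*b) (((d:ℝ) - 1)/d) k, mul_pow (2*b) (1/(d:ℝ)) k]
  have habsM : |M| = M := abs_of_nonneg hM0
  have habsm : |m| = -m := abs_of_nonpos hm0
  have main : |M| ^ k + |m| ^ k ≤
      (2 * b) ^ k * (((d:ℝ) - 1) / d) ^ k + (2 * b) ^ k * (1 / (d:ℝ)) ^ k := by
    rw [habsM, habsm]; linarith [key, hRHS]
  constructor
  · calc |M| ^ k + |m| ^ k ≤ _ := main
    _ = (2 * b) ^ k * ((((d:ℝ) - 1) / d) ^ k + (1 / (d:ℝ)) ^ k) := by ring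
  · have hM' : M ^ k ≤ |M| ^ k := by rw [habsM]
    have hm' : -(m ^ k) ≤ |m| ^ k := by
      rw [← abs_pow]; exact neg_le_abs _
    calc M ^ k - m ^ k ≤ |M| ^ k + |m| ^ k := by linarith
    _ ≤ _ := main.trans_eq (by ring)
end

section
/- Let n ≥ 1 be a natural number and p ∈ [0,1). Define γ = (2^{2n} − 2p + p²) / (2^{2n}·(1−p)²). Then (1/γ)·(1/(1−p))² = 2^{2n} / (2^{2n} − p(2−p)), and 2^{2n} / (2^{2n} − p(2−p)) ≥ 1, with equality if and only if p = 0. Consequently, under n-qubit global depolarizing noise with error probability p, the optimal Probabilistic Error Cancellation scheme (whose error mitigation cost is γ and which corrects the noise exactly so that ΔC_m = ΔC while ΔC̃ = (1−p)·ΔC) has relative resolvability χ = 2^{2n}/(2^{2n} − p(2−p)) ≥ 1 for every pair of cost landscape points. Moreover χ ≤ 4/3 for n = 1, and χ → 1 as n → ∞ for any fixed p ∈ [0,1]. -/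
/-- **Proposition 5** (relative resolvability of Probabilistic Error Cancellation
under global depolarizing noise). With the optimal error mitigation cost
`γ = (2^{2n} - 2p + p²)/(2^{2n}(1-p)²)` and exact correction (`ΔC_m = ΔC`,
`ΔC̃ = (1-p)ΔC`), the relative resolvability is
`χ = (1/γ)(1/(1-p))² = 2^{2n}/(2^{2n} - p(2-p)) ≥ 1`, with equality iff `p = 0`;
moreover `χ ≤ 4/3` for `n = 1` and `χ → 1` as `n → ∞`. -/
theorem pec_global_depolarizing_resolvability
    (n : ℕ) (hn : 1 ≤ n) (p : ℝ) (hp0 : 0 ≤ p) (hp1 : p < 1) :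
    (1 / (((2:ℝ) ^ (2 * n) - 2 * p + p ^ 2) / ((2:ℝ) ^ (2 * n) * (1 - p) ^ 2))) *
        (1 / (1 - p)) ^ 2 = (2:ℝ) ^ (2 * n) / ((2:ℝ) ^ (2 * n) - p * (2 - p)) ∧
    1 ≤ (2:ℝ) ^ (2 * n) / ((2:ℝ) ^ (2 * n) - p * (2 - p)) ∧
    ((2:ℝ) ^ (2 * n) / ((2:ℝ) ^ (2 * n) - p * (2 - p)) = 1 ↔ p = 0) ∧
    (n = 1 → (2:ℝ) ^ (2 * n) / ((2:ℝ) ^ (2 * n) - p * (2 - p)) ≤ 4 / 3) ∧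
    Filter.Tendsto (fun m : ℕ => (2:ℝ) ^ (2 * m) / ((2:ℝ) ^ (2 * m) - p * (2 - p)))
      Filter.atTop (nhds 1) := by
  have hc0 : 0 ≤ p * (2 - p) := mul_nonneg hp0 (by linarith)
  have hc1 : p * (2 - p) < 1 := by nlinarith [sq_nonneg (1 - p)]
  have hpowge : ∀ m : ℕ, (1:ℝ) ≤ (2:ℝ) ^ (2 * m) := fun m => one_le_pow₀ (by norm_num)
  have hden : ∀ m : ℕ, 0 < (2:ℝ) ^ (2 * m) - p * (2 - p) := fun m => by
    have := hpowge m; linarith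
  have h4 : (4:ℝ) ≤ (2:ℝ) ^ (2 * n) := by
    calc (4:ℝ) = 2 ^ 2 := by norm_num
    _ ≤ 2 ^ (2 * n) := pow_le_pow_right₀ (by norm_num) (by omega)
  have h1p : (1:ℝ) - p ≠ 0 := by linarith
  refine ⟨?_, ?_, ?_, ?_, ?_⟩
  · have key : ((2:ℝ) ^ (2 * n) - 2 * p + p ^ 2) = (2:ℝ) ^ (2 * n) - p * (2 - p) := by
      ring
    rw [one_div_div, key, div_mul_eq_mul_div]
    congr 1
    field_simp
  · rw [le_div_iff₀ (hden n)]
    nlinarith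
  · rw [div_eq_one_iff_eq (ne_of_gt (hden n))]
    constructor
    · intro h; nlinarith
    · intro h; rw [h]; ring
  · intro h; subst h
    rw [div_le_div_iff₀ (hden 1) (by norm_num)]
    norm_num
    nlinarith
  · have hto : Filter.Tendsto (fun m : ℕ => (2:ℝ) ^ (2 * m)) Filter.atTop Filter.atTop := by
      have : (fun m : ℕ => (2:ℝ) ^ (2 * m)) = fun m : ℕ => (4:ℝ) ^ m := by
        funext m; rw [pow_mul]; norm_num
      rw [this]
      exact tendsto_pow_atTop_atTop_of_one_lt (by norm_num)
    have hsub : Filter.Tendsto (fun m : ℕ => (2:ℝ) ^ (2 * m) - p * (2 - p))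
        Filter.atTop Filter.atTop := by
      simpa [sub_eq_add_neg] using
        Filter.tendsto_atTop_add_const_right Filter.atTop (-(p * (2 - p))) hto
    have h0 : Filter.Tendsto (fun m : ℕ => p * (2 - p) / ((2:ℝ) ^ (2 * m) - p * (2 - p)))
        Filter.atTop (nhds 0) := Filter.Tendsto.div_atTop tendsto_const_nhds hsub
    have := (tendsto_const_nhds : Filter.Tendsto (fun _ : ℕ => (1:ℝ)) Filter.atTop (nhds 1)).add h0
    rw [add_zero] at this
    refine this.congr fun m => ?_
    have hd := (hden m).ne'
    rw [eq_div_iff hd, add_mul, one_mul, div_mul_cancel₀ _ hd]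
    ring
end

section
/- Let b be a real number with 0 < b ≤ 3/4, and define h(p) = 4(1−p)² / ( (4 − 2p + p²)·(1 − bp)² ) for p ∈ [0,1]. Then h(p) ≤ 1 for all p ∈ [0,1], with equality at p = 0. Consequently, under a single instance of single-qubit local depolarizing noise with error probability p, if the averaged noisy cost difference satisfies ⟨ΔC̃⟩ ≥ (1 − bp)·⟨ΔC⟩ with b ≤ 3/4, then the average relative resolvability of the optimal Probabilistic Error Cancellation scheme satisfies χ̄ ≤ 1 for all p ∈ [0,1]. -/
/-- **Probabilistic Error Cancellation with one instance of local depolarizing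
noise, weak-concentration regime** (Appendix D). For `0 < b ≤ 3/4` the bound
`h(p) = 4(1-p)²/((4-2p+p²)(1-bp)²)` on the average relative resolvability of the
optimal PEC scheme satisfies `h(p) ≤ 1` for all `p ∈ [0,1]`, with equality at
`p = 0`. -/
theorem pec_local_depolarizing_weak_concentration
    (b : ℝ) (hb0 : 0 < b) (hb : b ≤ 3 / 4) :
    (∀ p : ℝ, 0 ≤ p → p ≤ 1 →
      4 * (1 - p) ^ 2 / ((4 - 2 * p + p ^ 2) * (1 - b * p) ^ 2) ≤ 1) ∧
    4 * (1 - (0:ℝ)) ^ 2 / ((4 - 2 * 0 + (0:ℝ) ^ 2) * (1 - b * 0) ^ 2) = 1 := by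
  constructor
  · intro p hp0 hp1
    have h1 : 0 < 1 - b * p := by nlinarith
    have h2 : 0 < 4 - 2 * p + p ^ 2 := by nlinarith [sq_nonneg p, sq_nonneg (1-p)]
    rw [div_le_one (by positivity)]
    have h3 : (1 - 3/4 * p)^2 ≤ (1 - b * p)^2 := by nlinarith [mul_nonneg (mul_nonneg (by linarith : (0:ℝ) ≤ 3/4 - b) hp0) (by nlinarith : (0:ℝ) ≤ 2 - (b + 3/4) * p)]
    have h4 : 0 ≤ 3 * p^2 * (3 * p^2 - 14 * p + 12) := by nlinarith [sq_nonneg p]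
    nlinarith [mul_le_mul_of_nonneg_left h3 (le_of_lt h2)]
  · norm_num
end

section
/- Let b be a real number with 3/4 < b ≤ 1, and define h(p) = 4(1−p)² / ( (4 − 2p + p²)·(1 − bp)² ). Let p' = 1 − (3·(1/b − 1))^{1/3}. Then p' ∈ (0, 1], and h(p) > 1 for all p with 0 < p ≤ p' and p < 1. In particular for b = 1, h(p) = 4/(4 − 2p + p²) > 1 for all p ∈ (0, 1). -/
/-!
Write `q = 1 - p`, so that `4 - 2p + p² = 3 + q²` and `h(p) > 1` reads `(3 + q²)(1 - bp)² < 4q²`.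
Taking cubes, `p ≤ p'` is the condition `b ≥ 3 / (3 + q³)`, and since `1 - bp` decreases in `b`
it gives `0 < 1 - bp ≤ q(3 + q²)/(3 + q³)`. The claim then reduces to the polynomial inequality
`(3 + q²)³ < 4(3 + q³)²`, whose difference factors as `3(q - 1)²(q⁴ + 2q³ + 6q + 3)`.
-/

noncomputable def resolvabilityBound (b p : ℝ) : ℝ :=
  4 * (1 - p) ^ 2 / ((4 - 2 * p + p ^ 2) * (1 - b * p) ^ 2)

lemma three_add_sq_pow_three_lt {q : ℝ} (hq : 0 ≤ q) (hq1 : q ≠ 1) :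
    (3 + q ^ 2) ^ 3 < 4 * (3 + q ^ 3) ^ 2 := by
  have hfactor : 0 < 3 * ((q - 1) ^ 2 * (q ^ 4 + 2 * q ^ 3 + 6 * q + 3)) := by
    have : 0 < (q - 1) ^ 2 := by positivity [sub_ne_zero.2 hq1]
    positivity
  linear_combination hfactor

lemma one_sub_mul_mul_le {b p : ℝ} (hp : 0 ≤ p) (hb : 3 ≤ b * (3 + (1 - p) ^ 3)) :
    (1 - b * p) * (3 + (1 - p) ^ 3) ≤ (1 - p) * (3 + (1 - p) ^ 2) := by
  linear_combination mul_le_mul_of_nonneg_right hb hp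

lemma one_lt_resolvabilityBound {b p : ℝ} (hp : 0 < p) (hp1 : p < 1) (hbp : b * p < 1)
    (hb : 3 ≤ b * (3 + (1 - p) ^ 3)) : 1 < resolvabilityBound b p := by
  have hq0 : 0 < 1 - p := by linarith
  have hbp0 : 0 < 1 - b * p := by linarith
  have hden : 0 < (4 - 2 * p + p ^ 2) * (1 - b * p) ^ 2 := by nlinarith
  have hupper := one_sub_mul_mul_le hp.le hb
  have hpoly := three_add_sq_pow_three_lt hq0.le (by linarith)
  have hscaled : (4 - 2 * p + p ^ 2) * (1 - b * p) ^ 2 * (3 + (1 - p) ^ 3) ^ 2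
      < 4 * (1 - p) ^ 2 * (3 + (1 - p) ^ 3) ^ 2 :=
    calc (4 - 2 * p + p ^ 2) * (1 - b * p) ^ 2 * (3 + (1 - p) ^ 3) ^ 2
        = (3 + (1 - p) ^ 2) * ((1 - b * p) * (3 + (1 - p) ^ 3)) ^ 2 := by ring
      _ ≤ (3 + (1 - p) ^ 2) * ((1 - p) * (3 + (1 - p) ^ 2)) ^ 2 := by gcongr
      _ = (1 - p) ^ 2 * (3 + (1 - p) ^ 2) ^ 3 := by ring
      _ < (1 - p) ^ 2 * (4 * (3 + (1 - p) ^ 3) ^ 2) := by gcongr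
      _ = 4 * (1 - p) ^ 2 * (3 + (1 - p) ^ 3) ^ 2 := by ring
  rw [resolvabilityBound, one_lt_div hden]
  exact lt_of_mul_lt_mul_right hscaled (by positivity)

lemma three_mul_one_div_sub_one_nonneg {b : ℝ} (hb0 : 0 < b) (hb1 : b ≤ 1) :
    0 ≤ 3 * (1 / b - 1) := by
  have : 1 ≤ 1 / b := by rw [le_div_iff₀ hb0]; linarith
  linarith

lemma three_le_mul_of_le_one_sub_rpow {b p : ℝ} (hb0 : 0 < b) (hb1 : b ≤ 1)
    (hp : p ≤ 1 - (3 * (1 / b - 1)) ^ ((1 : ℝ) / 3)) : 3 ≤ b * (3 + (1 - p) ^ 3) := by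
  have hx0 := three_mul_one_div_sub_one_nonneg hb0 hb1
  have hcube : 3 * (1 / b - 1) ≤ (1 - p) ^ 3 :=
    calc 3 * (1 / b - 1) = ((3 * (1 / b - 1)) ^ ((1 : ℝ) / 3)) ^ 3 := by
          rw [← Real.rpow_natCast, ← Real.rpow_mul hx0]; norm_num
      _ ≤ (1 - p) ^ 3 := by gcongr; linarith
  have hbx : b * (3 * (1 / b - 1)) = 3 - 3 * b := by field_simp
  nlinarith

/-- **Probabilistic Error Cancellation with one instance of local depolarizing
noise, intermediate-concentration regime** (Appendix D). For `3/4 < b ≤ 1`, the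
point `p' = 1 - (3(1/b - 1))^{1/3}` lies in `(0,1]` and
`h(p) = 4(1-p)²/((4-2p+p²)(1-bp)²) > 1` for all `0 < p ≤ p'` with `p < 1`; in
particular for `b = 1`, `h(p) = 4/(4-2p+p²) > 1` on all of `(0,1)`. -/
theorem pec_local_depolarizing_intermediate_concentration
    (b : ℝ) (hb : 3 / 4 < b) (hb1 : b ≤ 1) :
    0 < 1 - (3 * (1 / b - 1)) ^ ((1 : ℝ) / 3) ∧
    1 - (3 * (1 / b - 1)) ^ ((1 : ℝ) / 3) ≤ 1 ∧
    (∀ p : ℝ, 0 < p → p ≤ 1 - (3 * (1 / b - 1)) ^ ((1 : ℝ) / 3) → p < 1 →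
      1 < 4 * (1 - p) ^ 2 / ((4 - 2 * p + p ^ 2) * (1 - b * p) ^ 2)) ∧
    (b = 1 → ∀ p : ℝ, 0 < p → p < 1 →
      4 * (1 - p) ^ 2 / ((4 - 2 * p + p ^ 2) * (1 - b * p) ^ 2) = 4 / (4 - 2 * p + p ^ 2) ∧
      1 < 4 / (4 - 2 * p + p ^ 2)) := by
  have hb0 : 0 < b := by linarith
  have hx0 := three_mul_one_div_sub_one_nonneg hb0 hb1
  have hx1 : 3 * (1 / b - 1) < 1 := by
    have : 1 / b < 4 / 3 := by rw [div_lt_div_iff₀ hb0 (by norm_num)]; linarith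
    linarith
  have hbound : ∀ p : ℝ, 0 < p → p ≤ 1 - (3 * (1 / b - 1)) ^ ((1 : ℝ) / 3) → p < 1 →
      1 < resolvabilityBound b p := fun p hp hpp' hp1 =>
    one_lt_resolvabilityBound hp hp1 (by nlinarith)
      (three_le_mul_of_le_one_sub_rpow hb0 hb1 hpp')
  refine ⟨by linarith [Real.rpow_lt_one hx0 hx1 (by norm_num : (0 : ℝ) < 1 / 3)],
    by linarith [Real.rpow_nonneg hx0 ((1 : ℝ) / 3)], hbound, ?_⟩
  rintro rfl p hp hp1
  have hq : (1 - p) ^ 2 ≠ 0 := by positivity [(sub_pos.2 hp1).ne']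
  have heq : resolvabilityBound 1 p = 4 / (4 - 2 * p + p ^ 2) := by
    rw [resolvabilityBound, one_mul, mul_div_mul_right _ _ hq]
  exact ⟨heq, heq ▸ hbound p hp (by norm_num; linarith) hp1⟩
end

section
/- Let b > 1 be a real number and define h(p) = 4(1−p)² / ( (4 − 2p + p²)·(1 − bp)² ). Then for all p ∈ (0, 1/b), h(p) > 1 + p(2−p)/(4 − p(2−p)) = 4/(4 − 2p + p²) > 1. Consequently, under a single instance of single-qubit local depolarizing noise, if the cost concentrates exactly as ⟨ΔC̃⟩ = (1 − bp)·⟨ΔC⟩ with b > 1, the average relative resolvability of the optimal Probabilistic Error Cancellation scheme exceeds 1 + p(2−p)/(4 − p(2−p)) for all p ∈ (0, 1/b). -/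
/-!
Since `4 - 2p + p² = 3 + (1 - p)²` never vanishes, `1 + p(2-p)/(4 - p(2-p)) = 4/(4 - 2p + p²)`
for every real `p`, and this exceeds `1` exactly when `p(2 - p) > 0`. The resolvability factors as
`h(p) = 4/(4 - 2p + p²) · ((1 - p)/(1 - bp))²`, and for `b > 1`, `0 < p < 1/b` we have
`0 < 1 - bp < 1 - p`, so the squared ratio exceeds `1`.
-/

lemma four_sub_two_mul_add_sq_pos (p : ℝ) : 0 < 4 - 2 * p + p ^ 2 := by
  nlinarith [sq_nonneg (1 - p)]

lemma one_add_div_four_sub_eq (p : ℝ) :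
    1 + p * (2 - p) / (4 - p * (2 - p)) = 4 / (4 - 2 * p + p ^ 2) := by
  have hq := four_sub_two_mul_add_sq_pos p
  rw [show 4 - p * (2 - p) = 4 - 2 * p + p ^ 2 by ring, one_add_div hq.ne']
  ring

lemma one_lt_four_div {p : ℝ} (hp : 0 < p) (hp2 : p < 2) : 1 < 4 / (4 - 2 * p + p ^ 2) := by
  rw [one_lt_div (four_sub_two_mul_add_sq_pos p)]
  nlinarith

lemma four_mul_sq_div_eq (b p : ℝ) :
    4 * (1 - p) ^ 2 / ((4 - 2 * p + p ^ 2) * (1 - b * p) ^ 2) =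
      4 / (4 - 2 * p + p ^ 2) * ((1 - p) / (1 - b * p)) ^ 2 := by
  rw [div_pow, div_mul_div_comm]

lemma one_lt_sq_div {x y : ℝ} (hy : 0 < y) (hyx : y < x) : 1 < (x / y) ^ 2 :=
  one_lt_pow₀ ((one_lt_div hy).2 hyx) two_ne_zero

/-- **Probabilistic Error Cancellation with one instance of local depolarizing
noise, strong-concentration regime** (Appendix D). For `b > 1` and all
`p ∈ (0, 1/b)`, the average relative resolvability
`h(p) = 4(1-p)²/((4-2p+p²)(1-bp)²)` of the optimal PEC scheme exceeds
`1 + p(2-p)/(4 - p(2-p)) = 4/(4-2p+p²) > 1`. -/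
theorem pec_local_depolarizing_strong_concentration
    (b : ℝ) (hb : 1 < b) :
    ∀ p : ℝ, 0 < p → p < 1 / b →
      1 + p * (2 - p) / (4 - p * (2 - p)) <
          4 * (1 - p) ^ 2 / ((4 - 2 * p + p ^ 2) * (1 - b * p) ^ 2) ∧
      1 + p * (2 - p) / (4 - p * (2 - p)) = 4 / (4 - 2 * p + p ^ 2) ∧
      1 < 4 / (4 - 2 * p + p ^ 2) := by
  intro p hp hpb
  have hbp : b * p < 1 := by
    rw [lt_div_iff₀ (by linarith)] at hpb
    linarith
  have hp1 : p < 1 := by nlinarith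
  have hgap : 1 < 4 / (4 - 2 * p + p ^ 2) := one_lt_four_div hp (by linarith)
  have hratio : 1 < ((1 - p) / (1 - b * p)) ^ 2 := one_lt_sq_div (by linarith) (by nlinarith)
  refine ⟨?_, one_add_div_four_sub_eq p, hgap⟩
  rw [one_add_div_four_sub_eq, four_mul_sq_div_eq]
  exact lt_mul_of_one_lt_right (by linarith) hratio
end
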